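/- Under the hypotheses of the Lyapunov derivative identity, suppose additionally that R_0 ≤ 1 and that s_h(t,a) ≤ s_h^0(a) for all t, a ≥ 0. Then for every t > 0, d/dt L_0(t) ≤ (μ_v·I_v(t)/S_v^0)·(R_0² − 1) − (μ_v·S_v(t)/S_v^0)·(1 − S_v^0/S_v(t))² ≤ 0; that is, the Lyapunov functional L_0 is nonincreasing along the solution. -/

import Mathlib

/-!
Write `m = μₕ + δ + r₁`, so that `ψ' = m ψ - βₕ`. Against the transport equation for `iₕ`
this gives `d/dt ∫ ψ iₕ = Iᵥ ∫ ψ βᵥ sₕ - ∫ βₕ iₕ`. We prove the identity in integrated form: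
both `∫ ψ (m iₕ + ∂ₐ iₕ)` and `∫ βₕ iₕ` are the integral of `βₕ(s) e^{-∫ₐˢ m} (m iₕ + ∂ₐ iₕ)(a)`
over `0 < a < s` (Fubini, then variation of constants in `a`), so `ψ` need not be
differentiable. Since `Λᵥ = μᵥ Sᵥ⁰`, the vector terms of `L₀` then leave
`L₀' = Iᵥ ∫ ψ βᵥ sₕ - μᵥ Iᵥ / Sᵥ⁰ - (μᵥ Sᵥ / Sᵥ⁰) (1 - Sᵥ⁰ / Sᵥ)²`. Finally `sₕ ≤ sₕ⁰` and a second
use of Fubini give `∫ ψ βᵥ sₕ ≤ ∫ ψ βᵥ sₕ⁰ ≤ μᵥ R₀² / Sᵥ⁰`, and `R₀ ≤ 1` makes the bound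
nonpositive.
-/

open MeasureTheory Real Set Filter intervalIntegral

theorem AbsolutelyContinuousOnInterval.congr {X : Type*} [PseudoMetricSpace X] {f g : ℝ → X}
    {a b : ℝ} (hf : AbsolutelyContinuousOnInterval f a b) (hfg : EqOn f g (uIcc a b)) :
    AbsolutelyContinuousOnInterval g a b := by
  refine Tendsto.congr' ?_ hf
  filter_upwards [mem_inf_of_right (mem_principal_self _)] with E hE
  refine Finset.sum_congr rfl fun i hi => ?_
  rw [hfg (hE.1 i hi).1, hfg (hE.1 i hi).2]

theorem LipschitzOnWith.comp_absolutelyContinuousOnInterval {X Y : Type*} [PseudoMetricSpace X]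
    [PseudoMetricSpace Y] {g : X → Y} {f : ℝ → X} {K : NNReal} {t : Set X} {a b : ℝ}
    (hg : LipschitzOnWith K g t) (hf : AbsolutelyContinuousOnInterval f a b)
    (hft : MapsTo f (uIcc a b) t) : AbsolutelyContinuousOnInterval (g ∘ f) a b := by
  refine squeeze_zero' (Eventually.of_forall fun _ => Finset.sum_nonneg fun _ _ => dist_nonneg)
    ?_ (by simpa using Tendsto.const_mul (K : ℝ) hf)
  filter_upwards [mem_inf_of_right (mem_principal_self _)] with E hE
  rw [Finset.mul_sum]
  exact Finset.sum_le_sum fun i hi =>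
    hg.dist_le_mul _ (hft (hE.1 i hi).1) _ (hft (hE.1 i hi).2)

theorem AbsolutelyContinuousOnInterval.rexp {f : ℝ → ℝ} {a b : ℝ}
    (hf : AbsolutelyContinuousOnInterval f a b) :
    AbsolutelyContinuousOnInterval (fun x => exp (f x)) a b := by
  obtain ⟨K, hK⟩ :=
    contDiff_exp.locallyLipschitz.locallyLipschitzOn.exists_lipschitzOnWith_of_compact
      (isCompact_uIcc.image_of_continuousOn hf.continuousOn)
  exact hK.comp_absolutelyContinuousOnInterval hf (mapsTo_image _ _)

theorem absolutelyContinuousOnInterval_of_hasDerivAt {u u' : ℝ → ℝ} {a b : ℝ}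
    (hu : ∀ x ∈ uIcc a b, HasDerivAt u (u' x) x) (hu' : IntervalIntegrable u' volume a b) :
    AbsolutelyContinuousOnInterval u a b := by
  have hprim := hu'.absolutelyContinuousOnInterval_intervalIntegral left_mem_uIcc
  refine (show AbsolutelyContinuousOnInterval (fun x => (∫ y in a..x, u' y) + u a) a b by
    simpa [AbsolutelyContinuousOnInterval, dist_add_right] using hprim).congr fun x hx => ?_
  have hsub : uIcc a x ⊆ uIcc a b := uIcc_subset_uIcc_left hx
  dsimp only
  rw [integral_eq_sub_of_hasDerivAt (fun y hy => hu y (hsub hy)) (hu'.mono_set hsub)]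
  ring

theorem antitoneOn_of_forall_exists_hasDerivAt_nonpos {f : ℝ → ℝ} {s : Set ℝ} (hs : Convex ℝ s)
    (hso : IsOpen s) (h : ∀ x ∈ s, ∃ D, HasDerivAt f D x ∧ D ≤ 0) : AntitoneOn f s := by
  have hdiff : ∀ x ∈ s, DifferentiableAt ℝ f x := fun x hx =>
    let ⟨_, hD, _⟩ := h x hx
    hD.differentiableAt
  refine antitoneOn_of_deriv_nonpos hs (fun x hx => (hdiff x hx).continuousAt.continuousWithinAt)
    (fun x hx => ?_) fun x hx => ?_ <;> rw [hso.interior_eq] at hx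
  · exact (hdiff x hx).differentiableWithinAt
  · obtain ⟨D, hD, hD0⟩ := h x hx
    rwa [hD.deriv]

theorem intervalIntegrable_of_abs_le {f : ℝ → ℝ} {C : ℝ} (hf : Measurable f)
    (hC : ∀ x, |f x| ≤ C) (a b : ℝ) : IntervalIntegrable f volume a b :=
  intervalIntegrable_const.mono_fun' hf.aestronglyMeasurable (ae_of_all _ hC)

theorem integrable_prod_of_integral_norm_le {α γ E : Type*} [MeasurableSpace α]
    [MeasurableSpace γ] [NormedAddCommGroup E] {μ : Measure α} {ν : Measure γ} [SFinite ν]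
    {F : α × γ → E} {g : α → ℝ} (hF : AEStronglyMeasurable F (μ.prod ν))
    (hrow : ∀ᵐ x ∂μ, Integrable (fun y => F (x, y)) ν) (hg : Integrable g μ)
    (hle : ∀ᵐ x ∂μ, ∫ y, ‖F (x, y)‖ ∂ν ≤ g x) : Integrable F (μ.prod ν) := by
  refine (integrable_prod_iff hF).2 ⟨hrow, hg.mono' hF.norm.integral_prod_right' ?_⟩
  filter_upwards [hle] with x hx
  rwa [Real.norm_of_nonneg (integral_nonneg fun _ => norm_nonneg _)]

theorem integral_Ioi_zero_comp_add_left {E : Type*} [NormedAddCommGroup E] [NormedSpace ℝ E]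
    (g : ℝ → E) (c : ℝ) : ∫ x in Ioi 0, g (c + x) = ∫ x in Ioi c, g x := by
  simpa using (measurePreserving_add_left volume c).setIntegral_preimage_emb
    (measurableEmbedding_addLeft c) g (Ioi c)

theorem integrableOn_Ioi_zero_comp_add_left_iff {g : ℝ → ℝ} {c : ℝ} :
    IntegrableOn (fun x => g (c + x)) (Ioi 0) ↔ IntegrableOn g (Ioi c) := by
  simpa [Function.comp_def] using (measurePreserving_add_left volume c).integrableOn_comp_preimage
    (measurableEmbedding_addLeft c) (f := g) (s := Ioi c)

theorem integrableOn_exp_neg_mul_sub {μ₀ : ℝ} (hμ₀ : 0 < μ₀) (a : ℝ) :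
    IntegrableOn (fun s => exp (-(μ₀ * (s - a)))) (Ioi a) :=
  integrableOn_Ioi_zero_comp_add_left_iff.1 <| by
    simpa [neg_mul] using exp_neg_integrableOn_Ioi 0 hμ₀

theorem integral_exp_neg_mul_sub {μ₀ : ℝ} (hμ₀ : 0 < μ₀) (a : ℝ) :
    ∫ s in Ioi a, exp (-(μ₀ * (s - a))) = 1 / μ₀ := by
  rw [← integral_Ioi_zero_comp_add_left]
  simpa [neg_mul, ← neg_div] using integral_exp_mul_Ioi (neg_lt_zero.2 hμ₀) 0

noncomputable def survival (m : ℝ → ℝ) (a s : ℝ) : ℝ := exp (-∫ z in a..s, m z)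

/-- The paper's `ψ` is `residualInfectivity βₕ (μₕ + δ + r₁)`. -/
noncomputable def residualInfectivity (β m : ℝ → ℝ) (a : ℝ) : ℝ :=
  ∫ s in Ioi a, β s * survival m a s

theorem survival_nonneg (m : ℝ → ℝ) (a s : ℝ) : 0 ≤ survival m a s := (exp_pos _).le

section Survival

variable {m : ℝ → ℝ} {μ₀ a b : ℝ}

theorem continuous_survival (hm : ∀ a b, IntervalIntegrable m volume a b) :
    Continuous fun p : ℝ × ℝ => survival m p.1 p.2 := by
  have hsub : ∀ p : ℝ × ℝ, ∫ z in p.1..p.2, m z = (∫ z in 0..p.2, m z) - ∫ z in 0..p.1, m z :=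
    fun p => (integral_interval_sub_left (hm 0 p.2) (hm 0 p.1)).symm
  have hM := continuous_primitive hm 0
  simp only [survival, hsub]
  fun_prop

theorem survival_le_exp (hm : IntervalIntegrable m volume a b) (hmμ : ∀ x, μ₀ ≤ m x)
    (hab : a ≤ b) : survival m a b ≤ exp (-(μ₀ * (b - a))) := by
  refine exp_le_exp.2 (neg_le_neg ?_)
  calc μ₀ * (b - a) = ∫ _ in a..b, μ₀ := by simp [mul_comm]
    _ ≤ ∫ z in a..b, m z := integral_mono_on hab intervalIntegrable_const hm fun x _ => hmμ x

/-- Variation of constants for `u' + m u = q`. -/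
theorem integral_survival_mul_eq {u u' : ℝ → ℝ}
    (hm : IntervalIntegrable m volume a b) (hu : ∀ x ∈ uIcc a b, HasDerivAt u (u' x) x)
    (hu' : IntervalIntegrable u' volume a b) :
    ∫ x in a..b, survival m x b * (m x * u x + u' x) = u b - survival m a b * u a := by
  set E : ℝ → ℝ := fun x => exp (∫ y in a..x, m y)
  have hE : AbsolutelyContinuousOnInterval E a b :=
    (hm.absolutelyContinuousOnInterval_intervalIntegral left_mem_uIcc).rexp
  have hprod := hE.integral_deriv_mul_eq_sub (absolutelyContinuousOnInterval_of_hasDerivAt hu hu')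
  have hEu : ∫ x in a..b, E x * (m x * u x + u' x) = E b * u b - u a := by
    rw [show E a = 1 by simp [E], one_mul] at hprod
    rw [← hprod]
    refine integral_congr_ae ?_
    filter_upwards [hm.ae_hasDerivAt_integral] with x hx hxab
    have hx' : x ∈ uIcc a b := uIoc_subset_uIcc hxab
    rw [((hx hx' a left_mem_uIcc).exp).deriv, (hu x hx').deriv]
    ring
  have hsplit : ∀ x ∈ uIcc a b, survival m x b = survival m a b * E x := by
    intro x hx
    rw [survival, survival, ← exp_add,
      ← integral_interval_sub_left hm (hm.mono_set (uIcc_subset_uIcc_left hx))]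
    ring_nf
  rw [integral_congr fun x hx => by rw [hsplit x hx, mul_assoc],
    intervalIntegral.integral_const_mul, hEu]
  simp only [E, survival, mul_sub, ← mul_assoc, ← exp_add, neg_add_cancel, exp_zero, one_mul]

end Survival

section ResidualInfectivity

variable {m β : ℝ → ℝ} {μ₀ Bβ : ℝ}

theorem norm_mul_survival_le (hm : ∀ a b, IntervalIntegrable m volume a b)
    (hmμ : ∀ x, μ₀ ≤ m x) (hβB : ∀ x, |β x| ≤ Bβ) {a s : ℝ} (has : a ≤ s) :
    ‖β s * survival m a s‖ ≤ Bβ * exp (-(μ₀ * (s - a))) := by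
  rw [norm_mul, Real.norm_eq_abs, Real.norm_of_nonneg (survival_nonneg m a s)]
  exact mul_le_mul (hβB s) (survival_le_exp (hm a s) hmμ has) (survival_nonneg m a s)
    ((abs_nonneg _).trans (hβB s))

theorem integrableOn_mul_survival (hm : ∀ a b, IntervalIntegrable m volume a b) (hμ₀ : 0 < μ₀)
    (hmμ : ∀ x, μ₀ ≤ m x) (hβ : AEStronglyMeasurable β) (hβB : ∀ x, |β x| ≤ Bβ) (a : ℝ) :
    IntegrableOn (fun s => β s * survival m a s) (Ioi a) :=
  ((integrableOn_exp_neg_mul_sub hμ₀ a).const_mul Bβ).mono'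
    (hβ.restrict.mul
      ((continuous_survival hm).comp (Continuous.prodMk_right a)).aestronglyMeasurable)
    ((ae_restrict_iff' measurableSet_Ioi).2 (Eventually.of_forall fun _ hs =>
      norm_mul_survival_le hm hmμ hβB (le_of_lt hs)))

theorem residualInfectivity_nonneg (hβ0 : ∀ x, 0 ≤ β x) (a : ℝ) :
    0 ≤ residualInfectivity β m a :=
  setIntegral_nonneg measurableSet_Ioi fun s _ => mul_nonneg (hβ0 s) (survival_nonneg m a s)

theorem abs_residualInfectivity_le (hm : ∀ a b, IntervalIntegrable m volume a b) (hμ₀ : 0 < μ₀)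
    (hmμ : ∀ x, μ₀ ≤ m x) (hβB : ∀ x, |β x| ≤ Bβ) (a : ℝ) :
    |residualInfectivity β m a| ≤ Bβ / μ₀ := by
  calc |residualInfectivity β m a| ≤ ∫ s in Ioi a, Bβ * exp (-(μ₀ * (s - a))) :=
        norm_integral_le_of_norm_le ((integrableOn_exp_neg_mul_sub hμ₀ a).const_mul Bβ)
          ((ae_restrict_iff' measurableSet_Ioi).2 (Eventually.of_forall fun _ hs =>
            norm_mul_survival_le hm hmμ hβB (le_of_lt hs)))
    _ = Bβ / μ₀ := by
        rw [MeasureTheory.integral_const_mul, integral_exp_neg_mul_sub hμ₀, mul_one_div]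

theorem measurable_residualInfectivity (hm : ∀ a b, IntervalIntegrable m volume a b)
    (hβ : Measurable β) : Measurable (residualInfectivity β m) := by
  have hK : Measurable fun p : ℝ × ℝ =>
      {p : ℝ × ℝ | p.1 < p.2}.indicator (fun p => β p.2 * survival m p.1 p.2) p :=
    ((hβ.comp measurable_snd).mul (continuous_survival hm).measurable).indicator
      (measurableSet_lt measurable_fst measurable_snd)
  convert (hK.stronglyMeasurable.integral_prod_right' (ν := volume)).measurable using 2 with a
  exact (MeasureTheory.integral_indicator measurableSet_Ioi).symm

theorem setIntegral_indicator_lt_mul_survival (β q : ℝ → ℝ) {a : ℝ} (ha : 0 ≤ a) :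
    ∫ s in Ioi 0, {p : ℝ × ℝ | p.1 < p.2}.indicator
      (fun p => β p.2 * survival m p.1 p.2 * q p.1) (a, s)
      = residualInfectivity β m a * q a := by
  change ∫ s in Ioi 0, (Ioi a).indicator (fun s => β s * survival m a s * q a) s = _
  rw [setIntegral_indicator measurableSet_Ioi, inter_eq_right.2 (Ioi_subset_Ioi ha),
    MeasureTheory.integral_mul_const, residualInfectivity]

theorem integral_residualInfectivity_mul_eq (hm : ∀ a b, IntervalIntegrable m volume a b)
    (hμ₀ : 0 < μ₀) (hmμ : ∀ x, μ₀ ≤ m x) (hβ : Measurable β) (hβB : ∀ x, |β x| ≤ Bβ)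
    {u u' : ℝ → ℝ} (hu : ∀ x, HasDerivAt u (u' x) x) (hu0 : u 0 = 0)
    (hu' : IntegrableOn u' (Ioi 0)) (hq : IntegrableOn (fun a => m a * u a + u' a) (Ioi 0)) :
    ∫ a in Ioi 0, residualInfectivity β m a * (m a * u a + u' a) = ∫ s in Ioi 0, β s * u s := by
  set q := fun a => m a * u a + u' a
  -- Integrating `F` over `a` first is the variation-of-constants formula on `[0, s]`.
  set F : ℝ × ℝ → ℝ :=
    {p : ℝ × ℝ | p.1 < p.2}.indicator (fun p => β p.2 * survival m p.1 p.2 * q p.1)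
  have hF : AEStronglyMeasurable F ((volume.restrict (Ioi 0)).prod (volume.restrict (Ioi 0))) :=
    (((hβ.comp measurable_snd).mul (continuous_survival hm).measurable).aestronglyMeasurable.mul
      hq.aestronglyMeasurable.comp_fst).indicator (measurableSet_lt measurable_fst measurable_snd)
  have hrow : ∀ a ∈ Ioi (0 : ℝ), IntegrableOn (fun s => F (a, s)) (Ioi 0) := fun a _ =>
    (IntegrableOn.integrable_indicator ((integrableOn_mul_survival hm hμ₀ hmμ
      hβ.aestronglyMeasurable hβB a).mul_const (q a)) measurableSet_Ioi).integrableOn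
  have hnorm : ∀ a ∈ Ioi (0 : ℝ), ∫ s in Ioi 0, ‖F (a, s)‖ ≤ Bβ / μ₀ * ‖q a‖ := by
    intro a ha
    have hF_abs : ∀ s, ‖F (a, s)‖ = {p : ℝ × ℝ | p.1 < p.2}.indicator
        (fun p => |β p.2| * survival m p.1 p.2 * |q p.1|) (a, s) := fun s => by
      simp only [F, norm_indicator_eq_indicator_norm, norm_mul, Real.norm_eq_abs,
        abs_of_nonneg (survival_nonneg m _ _)]
    simp only [hF_abs]
    exact (setIntegral_indicator_lt_mul_survival (fun x => |β x|) (fun x => |q x|) ha.le).trans_le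
      (mul_le_mul_of_nonneg_right ((le_abs_self _).trans
        (abs_residualInfectivity_le hm hμ₀ hmμ (by simpa using hβB) a)) (abs_nonneg _))
  have hcol : ∀ s ∈ Ioi (0 : ℝ), ∫ a in Ioi 0, F (a, s) = β s * u s := by
    intro s hs
    have hu'_int : IntervalIntegrable u' volume 0 s :=
      (intervalIntegrable_iff_integrableOn_Ioc_of_le hs.le).2 (hu'.mono_set Ioc_subset_Ioi_self)
    change ∫ a in Ioi 0, (Iio s).indicator (fun a => β s * survival m a s * q a) a = _
    rw [setIntegral_indicator measurableSet_Iio, Ioi_inter_Iio, ← integral_Ioc_eq_integral_Ioo,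
      ← intervalIntegral.integral_of_le hs.le]
    simp only [mul_assoc]
    rw [intervalIntegral.integral_const_mul,
      integral_survival_mul_eq (hm 0 s) (fun x _ => hu x) hu'_int, hu0, mul_zero, sub_zero]
  calc ∫ a in Ioi 0, residualInfectivity β m a * q a
      = ∫ a in Ioi 0, ∫ s in Ioi 0, F (a, s) :=
        (setIntegral_congr_fun measurableSet_Ioi fun a ha =>
          setIntegral_indicator_lt_mul_survival β q (le_of_lt ha)).symm
    _ = ∫ s in Ioi 0, ∫ a in Ioi 0, F (a, s) := integral_integral_swap (f := fun a s => F (a, s))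
        (integrable_prod_of_integral_norm_le hF ((ae_restrict_iff' measurableSet_Ioi).2
          (Eventually.of_forall hrow)) (hq.norm.const_mul _)
          ((ae_restrict_iff' measurableSet_Ioi).2 (Eventually.of_forall hnorm)))
    _ = ∫ s in Ioi 0, β s * u s := setIntegral_congr_fun measurableSet_Ioi hcol

theorem setIntegral_Ioi_mul_survival_add (β f : ℝ → ℝ) (ξ : ℝ) :
    ∫ σ in Ioi 0, β (ξ + σ) * f ξ * survival m ξ (ξ + σ) = residualInfectivity β m ξ * f ξ := by
  simp only [mul_right_comm _ (f ξ)]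
  rw [MeasureTheory.integral_mul_const,
    integral_Ioi_zero_comp_add_left (fun s => β s * survival m ξ s), residualInfectivity]

theorem integral_integral_mul_survival_add (hm : ∀ a b, IntervalIntegrable m volume a b)
    (hμ₀ : 0 < μ₀) (hmμ : ∀ x, μ₀ ≤ m x) (hβ : Measurable β) (hβB : ∀ x, |β x| ≤ Bβ)
    {f : ℝ → ℝ} (hf : IntegrableOn f (Ioi 0)) :
    ∫ σ in Ioi 0, ∫ ξ in Ioi 0, β (ξ + σ) * f ξ * survival m ξ (ξ + σ)
      = ∫ ξ in Ioi 0, residualInfectivity β m ξ * f ξ := by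
  set G : ℝ × ℝ → ℝ := fun p => β (p.1 + p.2) * f p.1 * survival m p.1 (p.1 + p.2)
  have hG : AEStronglyMeasurable G ((volume.restrict (Ioi 0)).prod (volume.restrict (Ioi 0))) :=
    ((hβ.comp (measurable_fst.add measurable_snd)).aestronglyMeasurable.mul
      hf.aestronglyMeasurable.comp_fst).mul ((continuous_survival hm).comp
        (continuous_fst.prodMk (continuous_fst.add continuous_snd))).aestronglyMeasurable
  have hrow : ∀ ξ, IntegrableOn (fun σ => G (ξ, σ)) (Ioi 0) := fun ξ =>
    IntegrableOn.congr_fun ((integrableOn_Ioi_zero_comp_add_left_iff.2 (integrableOn_mul_survival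
      hm hμ₀ hmμ hβ.aestronglyMeasurable hβB ξ)).mul_const (f ξ))
        (fun σ _ => mul_right_comm _ _ _) measurableSet_Ioi
  have hnorm : ∀ ξ, ∫ σ in Ioi 0, ‖G (ξ, σ)‖ ≤ Bβ / μ₀ * ‖f ξ‖ := by
    intro ξ
    simp only [G, norm_mul, Real.norm_eq_abs, abs_of_nonneg (survival_nonneg m _ _)]
    exact (setIntegral_Ioi_mul_survival_add (fun x => |β x|) (fun x => |f x|) ξ).trans_le
      (mul_le_mul_of_nonneg_right ((le_abs_self _).trans
        (abs_residualInfectivity_le hm hμ₀ hmμ (by simpa using hβB) ξ)) (abs_nonneg _))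
  calc ∫ σ in Ioi 0, ∫ ξ in Ioi 0, G (ξ, σ)
      = ∫ ξ in Ioi 0, ∫ σ in Ioi 0, G (ξ, σ) :=
        (integral_integral_swap (f := fun ξ σ => G (ξ, σ)) (integrable_prod_of_integral_norm_le hG
          (Eventually.of_forall hrow) (hf.norm.const_mul _) (Eventually.of_forall hnorm))).symm
    _ = ∫ ξ in Ioi 0, residualInfectivity β m ξ * f ξ :=
        integral_congr_ae (Eventually.of_forall fun ξ => setIntegral_Ioi_mul_survival_add β f ξ)

theorem integrableOn_residualInfectivity_mul (hm : ∀ a b, IntervalIntegrable m volume a b)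
    (hμ₀ : 0 < μ₀) (hmμ : ∀ x, μ₀ ≤ m x) (hβ : Measurable β) (hβB : ∀ x, |β x| ≤ Bβ)
    {g : ℝ → ℝ} (hg : IntegrableOn g (Ioi 0)) :
    IntegrableOn (fun a => residualInfectivity β m a * g a) (Ioi 0) :=
  hg.bdd_mul (measurable_residualInfectivity hm hβ).aestronglyMeasurable
    (ae_of_all _ (abs_residualInfectivity_le hm hμ₀ hmμ hβB))

theorem integral_residualInfectivity_mul_add_le_of_transport
    (hm : ∀ a b, IntervalIntegrable m volume a b) (hμ₀ : 0 < μ₀) (hmμ : ∀ x, μ₀ ≤ m x)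
    (hβ : Measurable β) (hβB : ∀ x, |β x| ≤ Bβ) (hβ0 : ∀ x, 0 ≤ β x)
    {u u' w f f₀ : ℝ → ℝ} {I : ℝ} (hu : ∀ x, HasDerivAt u (u' x) x) (hu0 : u 0 = 0)
    (hu' : IntegrableOn u' (Ioi 0)) (hq : IntegrableOn (fun a => m a * u a + u' a) (Ioi 0))
    (hf : IntegrableOn f (Ioi 0)) (hf₀ : IntegrableOn f₀ (Ioi 0))
    (hff₀ : ∀ a ∈ Ioi (0 : ℝ), f a ≤ f₀ a) (hI : 0 ≤ I)
    (hw : ∀ a, w a + u' a = I * f a - m a * u a) :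
    (∫ a in Ioi 0, residualInfectivity β m a * w a) + ∫ a in Ioi 0, β a * u a
      ≤ I * ∫ a in Ioi 0, residualInfectivity β m a * f₀ a := by
  have hψ : ∀ {g : ℝ → ℝ}, IntegrableOn g (Ioi 0) →
      IntegrableOn (fun a => residualInfectivity β m a * g a) (Ioi 0) :=
    integrableOn_residualInfectivity_mul hm hμ₀ hmμ hβ hβB
  have hw_int : ∫ a in Ioi 0, residualInfectivity β m a * w a
      = I * (∫ a in Ioi 0, residualInfectivity β m a * f a)
        - ∫ a in Ioi 0, residualInfectivity β m a * (m a * u a + u' a) := by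
    rw [← MeasureTheory.integral_const_mul, ← integral_sub ((hψ hf).const_mul I) (hψ hq)]
    exact integral_congr_ae (ae_of_all _ fun a => by
      linear_combination residualInfectivity β m a * hw a)
  rw [hw_int, integral_residualInfectivity_mul_eq hm hμ₀ hmμ hβ hβB hu hu0 hu' hq, sub_add_cancel]
  exact mul_le_mul_of_nonneg_left (setIntegral_mono_on (hψ hf) (hψ hf₀) measurableSet_Ioi
    fun a ha => mul_le_mul_of_nonneg_left (hff₀ a ha) (residualInfectivity_nonneg hβ0 a)) hI

end ResidualInfectivity

theorem hasDerivAt_lyapunov_le {L Φ Sv Iv : ℝ → ℝ} {t DΦ B Λv μv Sv0 R0 : ℝ}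
    (hL : ∀ τ, L τ = Φ τ + (Sv τ / Sv0 - log (Sv τ / Sv0) - 1) + Iv τ / Sv0)
    (hΦ : HasDerivAt Φ DΦ t) (hSv : HasDerivAt Sv (Λv - Sv t * B - μv * Sv t) t)
    (hIv : HasDerivAt Iv (Sv t * B - μv * Iv t) t) (hΛv : Λv = μv * Sv0) (hSv0 : 0 < Sv0)
    (hSvt : 0 < Sv t) (hIvt : 0 ≤ Iv t) (hμv : 0 ≤ μv) (hR0 : R0 ^ 2 ≤ 1)
    (hDΦ : DΦ + B ≤ μv * Iv t / Sv0 * R0 ^ 2) :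
    ∃ D, HasDerivAt L D t ∧
      D ≤ (μv * Iv t / Sv0) * (R0 ^ 2 - 1) - (μv * Sv t / Sv0) * (1 - Sv0 / Sv t) ^ 2 ∧
      (μv * Iv t / Sv0) * (R0 ^ 2 - 1) - (μv * Sv t / Sv0) * (1 - Sv0 / Sv t) ^ 2 ≤ 0 := by
  have hg := ((hSv.div_const Sv0).sub
    ((hSv.div_const Sv0).log (div_pos hSvt hSv0).ne')).sub_const 1
  rw [show L = _ from funext hL]
  refine ⟨_, (hΦ.add hg).add (hIv.div_const Sv0), ?_, ?_⟩
  · have hD : DΦ + ((Λv - Sv t * B - μv * Sv t) / Sv0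
        - (Λv - Sv t * B - μv * Sv t) / Sv0 / (Sv t / Sv0)) + (Sv t * B - μv * Iv t) / Sv0
        = DΦ + B - μv * Iv t / Sv0 - (μv * Sv t / Sv0) * (1 - Sv0 / Sv t) ^ 2 := by
      subst hΛv
      field_simp
      ring
    rw [hD]
    nlinarith
  · have hIv' : 0 ≤ μv * Iv t / Sv0 := by positivity
    have hSv' : 0 ≤ μv * Sv t / Sv0 := by positivity
    nlinarith [mul_nonneg hIv' (sub_nonneg.2 hR0), mul_nonneg hSv' (sq_nonneg (1 - Sv0 / Sv t))]

theorem lyapunov_functional_nonincreasing_general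
    (Λh Λv μv μ0 : ℝ)
    (μh δ r1 βh βv : ℝ → ℝ)
    (hΛv : 0 < Λv) (hμv : 0 < μv) (hμ0 : 0 < μ0)
    (hμhm : Measurable μh) (hδm : Measurable δ) (hr1m : Measurable r1)
    (hβhm : Measurable βh) (hβvm : Measurable βv)
    (hμh_lb : ∀ a, μ0 ≤ μh a)
    (hδ0 : ∀ a, 0 ≤ δ a) (hr10 : ∀ a, 0 ≤ r1 a)
    (hβh0 : ∀ a, 0 ≤ βh a) (hβv0 : ∀ a, 0 ≤ βv a)
    (Bμh Bδ Br1 Bβh Bβv : ℝ)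
    (hμhB : ∀ a, μh a ≤ Bμh) (hδB : ∀ a, δ a ≤ Bδ) (hr1B : ∀ a, r1 a ≤ Br1)
    (hβhB : ∀ a, βh a ≤ Bβh) (hβvB : ∀ a, βv a ≤ Bβv)
    (sh0 : ℝ → ℝ) (hsh0 : ∀ a, sh0 a = Λh * exp (-(∫ u in (0:ℝ)..a, μh u)))
    (Sv0 : ℝ) (hSv0def : Sv0 = Λv / μv)
    (R0 : ℝ)
    (hR0 : R0 = Real.sqrt ((Sv0 / μv) * ∫ s in Ioi (0:ℝ), ∫ ξ in Ioi (0:ℝ),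
      βh (ξ+s) * βv ξ * sh0 ξ * exp (-(∫ u in ξ..(ξ+s), (μh u + r1 u + δ u)))))
    (hR0le : R0 ≤ 1)
    (ψ : ℝ → ℝ)
    (hψ : ∀ a, ψ a = ∫ s in Ioi a, βh s * exp (-(∫ z in a..s, (μh z + δ z + r1 z))))
    -- the solution
    (sh ih : ℝ → ℝ → ℝ) (Sv Iv : ℝ → ℝ) (iht iha : ℝ → ℝ → ℝ)
    (hSv_pos : ∀ t, 0 < Sv t) (hIv_pos : ∀ t, 0 ≤ Iv t)
    (hbc : ∀ t, ih t 0 = 0)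
    (hih_a : ∀ t a, HasDerivAt (fun α => ih t α) (iha t a) a)
    (hPDE_i : ∀ t a, iht t a + iha t a
      = βv a * Iv t * sh t a - (μh a + δ a + r1 a) * ih t a)
    (hSv : ∀ t, HasDerivAt Sv
      (Λv - Sv t * (∫ a in Ioi (0:ℝ), βh a * ih t a) - μv * Sv t) t)
    (hIv : ∀ t, HasDerivAt Iv
      (Sv t * (∫ a in Ioi (0:ℝ), βh a * ih t a) - μv * Iv t) t)
    (hsh_int : ∀ t, IntegrableOn (sh t) (Ioi 0))
    (hih_int : ∀ t, IntegrableOn (ih t) (Ioi 0))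
    (hiha_int : ∀ t, IntegrableOn (iha t) (Ioi 0))
    (hdiff_int : ∀ t, HasDerivAt (fun τ => ∫ a in Ioi (0:ℝ), ψ a * ih τ a)
      (∫ a in Ioi (0:ℝ), ψ a * iht t a) t)
    -- the comparison with the parasite-free equilibrium
    (hsh_le : ∀ t a, 0 ≤ t → 0 ≤ a → sh t a ≤ sh0 a)
    -- the Lyapunov functional
    (L0 : ℝ → ℝ)
    (hL0 : ∀ t, L0 t = (∫ a in Ioi (0:ℝ), ψ a * ih t a)
      + (Sv t / Sv0 - Real.log (Sv t / Sv0) - 1) + Iv t / Sv0) :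
    (∀ t, 0 < t → ∃ D : ℝ, HasDerivAt L0 D t ∧
      D ≤ (μv * Iv t / Sv0) * (R0 ^ 2 - 1)
            - (μv * Sv t / Sv0) * (1 - Sv0 / Sv t) ^ 2 ∧
      (μv * Iv t / Sv0) * (R0 ^ 2 - 1)
            - (μv * Sv t / Sv0) * (1 - Sv0 / Sv t) ^ 2 ≤ 0) ∧
    AntitoneOn L0 (Ioi 0) := by
  set m : ℝ → ℝ := fun z => μh z + δ z + r1 z
  have hmμ : ∀ x, μ0 ≤ m x := fun x => by linarith [hμh_lb x, hδ0 x, hr10 x]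
  have hmB : ∀ x, |m x| ≤ Bμh + Bδ + Br1 := fun x =>
    (abs_of_pos (hμ0.trans_le (hmμ x))).trans_le (by linarith [hμhB x, hδB x, hr1B x])
  have hm_meas : Measurable m := (hμhm.add hδm).add hr1m
  have hm := intervalIntegrable_of_abs_le hm_meas hmB
  have hβhB' : ∀ x, |βh x| ≤ Bβh := fun x => (abs_of_nonneg (hβh0 x)).trans_le (hβhB x)
  have hβvB' : ∀ x, |βv x| ≤ Bβv := fun x => (abs_of_nonneg (hβv0 x)).trans_le (hβvB x)
  obtain rfl : ψ = residualInfectivity βh m := funext hψ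
  have hSv0 : 0 < Sv0 := hSv0def ▸ div_pos hΛv hμv
  have hsh0_int : IntegrableOn (fun a => βv a * sh0 a) (Ioi 0) := by
    refine IntegrableOn.congr_fun ((integrableOn_mul_survival (intervalIntegrable_of_abs_le hμhm
      fun x => (abs_of_pos (hμ0.trans_le (hμh_lb x))).trans_le (hμhB x)) hμ0 hμh_lb
      hβvm.aestronglyMeasurable hβvB' 0).const_mul Λh) (fun a _ => ?_) measurableSet_Ioi
    rw [hsh0, survival]
    ring
  have hR0' : ∫ a in Ioi 0, residualInfectivity βh m a * (βv a * sh0 a) ≤ μv / Sv0 * R0 ^ 2 := by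
    have hm' : ∀ u, μh u + r1 u + δ u = m u := fun u => add_right_comm _ _ _
    rw [hR0, Real.sq_sqrt', ← integral_integral_mul_survival_add hm hμ0 hmμ hβhm hβhB' hsh0_int]
    simp only [hm', survival, mul_assoc]
    exact (le_of_eq (by field_simp)).trans
      (mul_le_mul_of_nonneg_left (le_max_left _ _) (by positivity))
  refine (and_iff_left_of_imp fun hmain => ?_).2 fun t ht => ?_
  · exact antitoneOn_of_forall_exists_hasDerivAt_nonpos (convex_Ioi 0) isOpen_Ioi fun t ht =>
      let ⟨D, hD, hle, hnonpos⟩ := hmain t ht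
      ⟨D, hD, hle.trans hnonpos⟩
  · refine hasDerivAt_lyapunov_le hL0 (hdiff_int t) (hSv t) (hIv t) (by rw [hSv0def]; field_simp)
      hSv0 (hSv_pos t) (hIv_pos t) hμv.le (pow_le_one₀ (hR0 ▸ Real.sqrt_nonneg _) hR0le) ?_
    exact (integral_residualInfectivity_mul_add_le_of_transport hm hμ0 hmμ hβhm hβhB' hβh0
      (hih_a t) (hbc t) (hiha_int t) (((hih_int t).bdd_mul hm_meas.aestronglyMeasurable
        (ae_of_all _ hmB)).add (hiha_int t))
      ((hsh_int t).bdd_mul hβvm.aestronglyMeasurable (ae_of_all _ hβvB')) hsh0_int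
      (fun a ha => mul_le_mul_of_nonneg_left (hsh_le t a ht.le ha.le) (hβv0 a)) (hIv_pos t)
      (fun a => by rw [hPDE_i]; ring)).trans
      ((mul_le_mul_of_nonneg_left hR0' (hIv_pos t)).trans_eq (by ring))

/-- When `R₀ ≤ 1` and `s_h(t,a) ≤ s_h⁰(a)`, the Lyapunov functional `L₀` of the
age-structured SIRS/SI malaria model has nonpositive derivative along the solution,
bounded by `(μ_v I_v/S_v⁰)(R₀²−1) − (μ_v S_v/S_v⁰)(1−S_v⁰/S_v)²`, and is nonincreasing. -/
theorem lyapunov_functional_nonincreasing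
    (Λh Λv μv μ0 : ℝ)
    (μh δ r1 r2 βh βv : ℝ → ℝ)
    (hΛh : 0 < Λh) (hΛv : 0 < Λv) (hμv : 0 < μv) (hμ0 : 0 < μ0)
    (hμhm : Measurable μh) (hδm : Measurable δ) (hr1m : Measurable r1)
    (hr2m : Measurable r2) (hβhm : Measurable βh) (hβvm : Measurable βv)
    (hμh_lb : ∀ a, μ0 ≤ μh a) (hμv_lb : μ0 ≤ μv)
    (hδ0 : ∀ a, 0 ≤ δ a) (hr10 : ∀ a, 0 ≤ r1 a) (hr20 : ∀ a, 0 ≤ r2 a)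
    (hβh0 : ∀ a, 0 ≤ βh a) (hβv0 : ∀ a, 0 ≤ βv a)
    (Bμh Bδ Br1 Br2 Bβh Bβv : ℝ)
    (hμhB : ∀ a, μh a ≤ Bμh) (hδB : ∀ a, δ a ≤ Bδ) (hr1B : ∀ a, r1 a ≤ Br1)
    (hr2B : ∀ a, r2 a ≤ Br2) (hβhB : ∀ a, βh a ≤ Bβh) (hβvB : ∀ a, βv a ≤ Bβv)
    (sh0 : ℝ → ℝ) (hsh0 : ∀ a, sh0 a = Λh * exp (-(∫ u in (0:ℝ)..a, μh u)))
    (Sv0 : ℝ) (hSv0def : Sv0 = Λv / μv)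
    (R0 : ℝ)
    (hR0 : R0 = Real.sqrt ((Sv0 / μv) * ∫ s in Ioi (0:ℝ), ∫ ξ in Ioi (0:ℝ),
      βh (ξ+s) * βv ξ * sh0 ξ * exp (-(∫ u in ξ..(ξ+s), (μh u + r1 u + δ u)))))
    (hR0le : R0 ≤ 1)
    (ψ : ℝ → ℝ)
    (hψ : ∀ a, ψ a = ∫ s in Ioi a, βh s * exp (-(∫ z in a..s, (μh z + δ z + r1 z))))
    -- the solution
    (sh ih rh : ℝ → ℝ → ℝ) (Sv Iv : ℝ → ℝ) (iht iha : ℝ → ℝ → ℝ)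
    (hsh_pos : ∀ t a, 0 ≤ sh t a) (hih_pos : ∀ t a, 0 ≤ ih t a)
    (hSv_pos : ∀ t, 0 < Sv t) (hIv_pos : ∀ t, 0 ≤ Iv t)
    (hbc : ∀ t, ih t 0 = 0)
    (hih_t : ∀ t a, HasDerivAt (fun τ => ih τ a) (iht t a) t)
    (hih_a : ∀ t a, HasDerivAt (fun α => ih t α) (iha t a) a)
    (hPDE_i : ∀ t a, iht t a + iha t a
      = βv a * Iv t * sh t a - (μh a + δ a + r1 a) * ih t a)
    (hPDE_s : ∀ t a, 0 < t → 0 < a → HasDerivAt (fun h => sh (t+h) (a+h))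
      (-(βv a) * Iv t * sh t a - μh a * sh t a + r2 a * rh t a) 0)
    (hPDE_r : ∀ t a, 0 < t → 0 < a → HasDerivAt (fun h => rh (t+h) (a+h))
      (r1 a * ih t a - (r2 a + μh a) * rh t a) 0)
    (hbc_s : ∀ t, sh t 0 = Λh) (hbc_r : ∀ t, rh t 0 = 0)
    (hSv : ∀ t, HasDerivAt Sv
      (Λv - Sv t * (∫ a in Ioi (0:ℝ), βh a * ih t a) - μv * Sv t) t)
    (hIv : ∀ t, HasDerivAt Iv
      (Sv t * (∫ a in Ioi (0:ℝ), βh a * ih t a) - μv * Iv t) t)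
    (hsh_int : ∀ t, IntegrableOn (sh t) (Ioi 0))
    (hih_int : ∀ t, IntegrableOn (ih t) (Ioi 0))
    (hiha_int : ∀ t, IntegrableOn (iha t) (Ioi 0))
    (hdecay : ∀ t, Filter.Tendsto (fun a => ψ a * ih t a) Filter.atTop (nhds 0))
    (hdiff_int : ∀ t, HasDerivAt (fun τ => ∫ a in Ioi (0:ℝ), ψ a * ih τ a)
      (∫ a in Ioi (0:ℝ), ψ a * iht t a) t)
    -- the comparison with the parasite-free equilibrium
    (hsh_le : ∀ t a, 0 ≤ t → 0 ≤ a → sh t a ≤ sh0 a)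
    -- the Lyapunov functional
    (L0 : ℝ → ℝ)
    (hL0 : ∀ t, L0 t = (∫ a in Ioi (0:ℝ), ψ a * ih t a)
      + (Sv t / Sv0 - Real.log (Sv t / Sv0) - 1) + Iv t / Sv0) :
    (∀ t, 0 < t → ∃ D : ℝ, HasDerivAt L0 D t ∧
      D ≤ (μv * Iv t / Sv0) * (R0 ^ 2 - 1)
            - (μv * Sv t / Sv0) * (1 - Sv0 / Sv t) ^ 2 ∧
      (μv * Iv t / Sv0) * (R0 ^ 2 - 1)
            - (μv * Sv t / Sv0) * (1 - Sv0 / Sv t) ^ 2 ≤ 0) ∧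
    AntitoneOn L0 (Ioi 0) :=
  lyapunov_functional_nonincreasing_general Λh Λv μv μ0 μh δ r1 βh βv hΛv hμv hμ0 hμhm hδm hr1m hβhm
    hβvm hμh_lb hδ0 hr10 hβh0 hβv0 Bμh Bδ Br1 Bβh Bβv hμhB hδB hr1B hβhB hβvB sh0 hsh0 Sv0 hSv0def
    R0 hR0 hR0le ψ hψ sh ih Sv Iv iht iha hSv_pos hIv_pos hbc hih_a hPDE_i hSv hIv hsh_int hih_int
    hiha_int hdiff_int hsh_le L0 hL0
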